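/- Let a, b, c, k, l, m be nonnegative integers with b < l ≤ c and m ≤ b. Set L = a+b+k, B = {−(l−b)+1, −(l−b)+2, ..., −1, 0} and C = {L+1, L+2, ..., L+(c−l)}. Let X, Y ⊆ [L] be disjoint with |X| = m+k and |Y| = m. Then (Σ_Z Δ(X∪Z∪C)·Δ(B∪Y∪Z)) · Δ(B,X)·Δ(Y,C) = (Σ_Z Δ(B∪X∪Z)·Δ(Y∪Z∪C)) · Δ(X,C)·Δ(B,Y), where both sums range over all subsets Z ⊆ [L]∖(X∪Y) with |Z| = b−m. -/
import Mathlib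


/-- `Δ(S) = ∏_{s₁,s₂ ∈ S, s₁ < s₂} (s₂ - s₁)`. -/
def Dset (S : Finset ℤ) : ℤ :=
  ∏ x ∈ S, ∏ y ∈ S.filter (fun y => x < y), (y - x)

/-- `Δ(S,T) = ∏_{s ∈ S, t ∈ T} |t - s|`. -/
def Dpair (S T : Finset ℤ) : ℤ :=
  ∏ s ∈ S, ∏ t ∈ T, |t - s|

lemma Dset_union (S T : Finset ℤ) (h : ∀ s ∈ S, ∀ t ∈ T, s < t) :
    Dset (S ∪ T) = Dset S * Dpair S T * Dset T := by
  have hd : Disjoint S T :=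
    Finset.disjoint_left.mpr fun x hx hx' => lt_irrefl x (h x hx x hx')
  unfold Dset Dpair
  rw [Finset.prod_union hd]
  have h1 : ∀ x ∈ S, (∏ y ∈ (S ∪ T).filter (fun y => x < y), (y - x))
      = (∏ y ∈ S.filter (fun y => x < y), (y - x)) * ∏ t ∈ T, |t - x| := by
    intro x hx
    rw [Finset.filter_union,
      Finset.prod_union (Finset.disjoint_filter_filter hd)]
    congr 1
    rw [Finset.filter_true_of_mem (fun t ht => h x hx t ht)]
    exact Finset.prod_congr rfl fun t ht =>
      (abs_of_pos (by linarith [h x hx t ht])).symm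
  have h2 : ∀ x ∈ T, (∏ y ∈ (S ∪ T).filter (fun y => x < y), (y - x))
      = ∏ y ∈ T.filter (fun y => x < y), (y - x) := by
    intro x hx
    congr 1
    rw [Finset.filter_union, Finset.filter_false_of_mem, Finset.empty_union]
    intro s hs
    exact not_lt.mpr (le_of_lt (h s hs x hx))
  rw [Finset.prod_congr rfl h1, Finset.prod_congr rfl h2,
    Finset.prod_mul_distrib]

lemma Dpair_union_left (S T U : Finset ℤ) (h : Disjoint S T) :
    Dpair (S ∪ T) U = Dpair S U * Dpair T U := by
  unfold Dpair; exact Finset.prod_union h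

lemma Dpair_union_right (S T U : Finset ℤ) (h : Disjoint T U) :
    Dpair S (T ∪ U) = Dpair S T * Dpair S U := by
  unfold Dpair
  rw [← Finset.prod_mul_distrib]
  exact Finset.prod_congr rfl fun s _ => Finset.prod_union h

theorem sum_identity_case_b_lt_l (a b c k l m : ℕ)
    (hbl : b < l) (hlc : l ≤ c) (hmb : m ≤ b)
    (L : ℕ) (hL : L = a + b + k)
    (B C : Finset ℤ)
    (hB : B = Finset.Icc ((b : ℤ) - l + 1) 0)
    (hC : C = Finset.Icc ((L : ℤ) + 1) ((L : ℤ) + c - l))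
    (X Y : Finset ℤ)
    (hX : X ⊆ Finset.Icc (1 : ℤ) L) (hY : Y ⊆ Finset.Icc (1 : ℤ) L)
    (hXY : Disjoint X Y)
    (hXcard : X.card = m + k) (hYcard : Y.card = m) :
    (∑ Z ∈ Finset.powersetCard (b - m) (Finset.Icc (1 : ℤ) L \ (X ∪ Y)),
        Dset (X ∪ Z ∪ C) * Dset (B ∪ Y ∪ Z)) * (Dpair B X * Dpair Y C) =
      (∑ Z ∈ Finset.powersetCard (b - m) (Finset.Icc (1 : ℤ) L \ (X ∪ Y)),
        Dset (B ∪ X ∪ Z) * Dset (Y ∪ Z ∪ C)) * (Dpair X C * Dpair B Y) := by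
  have hBle : ∀ s ∈ B, s ≤ 0 := by
    intro s hs; rw [hB, Finset.mem_Icc] at hs; exact hs.2
  have hCge : ∀ t ∈ C, (L : ℤ) + 1 ≤ t := by
    intro t ht; rw [hC, Finset.mem_Icc] at ht; exact ht.1
  rw [Finset.sum_mul, Finset.sum_mul]
  refine Finset.sum_congr rfl fun Z hZ => ?_
  rw [Finset.mem_powersetCard] at hZ
  have hZsub : Z ⊆ Finset.Icc (1 : ℤ) L := fun z hz =>
    (Finset.mem_sdiff.mp (hZ.1 hz)).1
  have hZX : Disjoint X Z := Finset.disjoint_right.mpr fun z hz hzX =>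
    (Finset.mem_sdiff.mp (hZ.1 hz)).2 (Finset.mem_union_left _ hzX)
  have hZY : Disjoint Y Z := Finset.disjoint_right.mpr fun z hz hzY =>
    (Finset.mem_sdiff.mp (hZ.1 hz)).2 (Finset.mem_union_right _ hzY)
  -- ordering facts
  have hmid : ∀ t : ℤ, t ∈ Finset.Icc (1 : ℤ) L → 1 ≤ t ∧ t ≤ L := by
    intro t ht; exact Finset.mem_Icc.mp ht
  have hBlt : ∀ s ∈ B, ∀ t ∈ Finset.Icc (1 : ℤ) L, s < t := by
    intro s hs t ht; have := hBle s hs; have := (hmid t ht).1; linarith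
  have hltC : ∀ s ∈ Finset.Icc (1 : ℤ) L, ∀ t ∈ C, s < t := by
    intro s hs t ht; have := (hmid s hs).2; have := hCge t ht; linarith
  have hXZsub : X ∪ Z ⊆ Finset.Icc (1 : ℤ) L := Finset.union_subset hX hZsub
  have hYZsub : Y ∪ Z ⊆ Finset.Icc (1 : ℤ) L := Finset.union_subset hY hZsub
  -- splittings
  have e1 : Dset (X ∪ Z ∪ C)
      = Dset (X ∪ Z) * (Dpair X C * Dpair Z C) * Dset C := by
    rw [Dset_union (X ∪ Z) C (fun s hs t ht => hltC s (hXZsub hs) t ht),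
      Dpair_union_left X Z C hZX]
  have e2 : Dset (B ∪ Y ∪ Z)
      = Dset B * (Dpair B Y * Dpair B Z) * Dset (Y ∪ Z) := by
    rw [Finset.union_assoc,
      Dset_union B (Y ∪ Z) (fun s hs t ht => hBlt s hs t (hYZsub ht)),
      Dpair_union_right B Y Z hZY]
  have e3 : Dset (B ∪ X ∪ Z)
      = Dset B * (Dpair B X * Dpair B Z) * Dset (X ∪ Z) := by
    rw [Finset.union_assoc,
      Dset_union B (X ∪ Z) (fun s hs t ht => hBlt s hs t (hXZsub ht)),
      Dpair_union_right B X Z hZX]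
  have e4 : Dset (Y ∪ Z ∪ C)
      = Dset (Y ∪ Z) * (Dpair Y C * Dpair Z C) * Dset C := by
    rw [Dset_union (Y ∪ Z) C (fun s hs t ht => hltC s (hYZsub hs) t ht),
      Dpair_union_left Y Z C hZY]
  rw [e1, e2, e3, e4]
  ring
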